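/- arXiv:1401.6452 — 5 statements merged into one kernel-verified Lean document; each statement's English description precedes it below -/
import Mathlib

section
/- Let G be a finite connected graph with positive integer vertex multiplicities mult(i). For each vertex i, say a real-valued function φ_i defined on the star of i (i.e., given by values φ_i(j) for j = i and all j adjacent to i) is 'linear at i' if φ_i(i)·Σ_{j∼i} mult(j) = Σ_{j∼i} mult(j)·φ_i(j), where j∼i ranges over neighbors of i. Define d⁰ sending a collection {φ_i} of functions linear at each vertex to the collection {φ_j − φ_k restricted to the edge jk}_{j≺k}, and define deg({ψ_{jk}}) = Σ_{j≺k} mult(j)·mult(k)·(ψ_{jk}(k) − ψ_{jk}(j)). Then deg ∘ d⁰ = 0. -/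
open Finset

/-!
Writing `d⁰({φ_i})_{jk}(k) - d⁰({φ_i})_{jk}(j) = (φ_j(k) - φ_j(j)) + (φ_k(j) - φ_k(k))`, the degree
becomes a sum over ordered pairs of adjacent vertices of `mult(j)·mult(k)·(φ_j(k) - φ_j(j))`.
Grouped by `j`, the inner sum is `mult(j)` times the defect of linearity of `φ_j` at `j`, hence zero.
-/

variable {V : Type} {R : Type*}

def IsLinearAt [Fintype V] [CommRing R] (Adj : V → V → Prop) [DecidableRel Adj] (w ψ : V → R)
    (i : V) : Prop :=
  ψ i * (∑ j, if Adj i j then w j else 0) = ∑ j, if Adj i j then w j * ψ j else 0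

theorem IsLinearAt.sum_mul_sub_eq_zero [Fintype V] [CommRing R] {Adj : V → V → Prop}
    [DecidableRel Adj] {w ψ : V → R} {i : V} (h : IsLinearAt Adj w ψ i) :
    ∑ j, (if Adj i j then w j * (ψ j - ψ i) else 0) = 0 := by
  calc ∑ j, (if Adj i j then w j * (ψ j - ψ i) else 0)
      = (∑ j, if Adj i j then w j * ψ j else 0) - ψ i * ∑ j, (if Adj i j then w j else 0) := by
        rw [mul_sum, ← sum_sub_distrib]
        refine sum_congr rfl fun j _ => ?_
        split_ifs <;> ring
    _ = 0 := sub_eq_zero.mpr h.symm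

theorem sum_adj_lt_add_swap [Fintype V] [LinearOrder V] [AddCommMonoid R]
    {Adj : V → V → Prop} [DecidableRel Adj] (hsymm : ∀ j k, Adj j k → Adj k j)
    (f : V → V → R) (hf : ∀ j, f j j = 0) :
    ∑ j, ∑ k, (if Adj j k ∧ j < k then f j k + f k j else 0)
      = ∑ j, ∑ k, if Adj j k then f j k else 0 := by
  have hswap : ∑ j, ∑ k, (if Adj j k ∧ j < k then f k j else 0)
      = ∑ j, ∑ k, if Adj k j ∧ k < j then f j k else 0 := sum_comm
  simp only [ite_add_zero, sum_add_distrib, hswap]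
  rw [← sum_add_distrib]
  refine sum_congr rfl fun j _ => ?_
  rw [← sum_add_distrib]
  refine sum_congr rfl fun k _ => ?_
  rcases lt_trichotomy j k with hjk | rfl | hkj
  · simp [hjk, hjk.not_gt]
  · simp [hf]
  · simp only [hkj, hkj.not_gt, and_true, and_false, if_false, zero_add]
    exact if_congr ⟨hsymm k j, hsymm j k⟩ rfl rfl

/-- The star function `φ_i` is encoded as `φ i : V → ℝ`; only its values at `i` and at the
neighbours of `i` matter. On the edge `j ≺ k`, `d⁰({φ_i})_{jk} = φ_j - φ_k` takes the value
`φ j k - φ k k` at `k` and `φ j j - φ k j` at `j`. -/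
theorem deg_comp_d0_eq_zero_general
    {V : Type} [Fintype V] [LinearOrder V]
    (Adj : V → V → Prop) [DecidableRel Adj]
    (hsymm : ∀ j k, Adj j k → Adj k j)
    (mult : V → ℤ)
    (φ : V → V → ℝ)
    (hlin : ∀ i, φ i i * (∑ j, if Adj i j then (mult j : ℝ) else 0)
        = ∑ j, if Adj i j then (mult j : ℝ) * φ i j else 0) :
    ∑ j, ∑ k, (if Adj j k ∧ j < k then
      (mult j : ℝ) * (mult k : ℝ) * ((φ j k - φ k k) - (φ j j - φ k j)) else 0) = 0 := by
  set f : V → V → ℝ := fun j k => (mult j : ℝ) * ((mult k : ℝ) * (φ j k - φ j j)) with hf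
  calc ∑ j, ∑ k, (if Adj j k ∧ j < k then
        (mult j : ℝ) * (mult k : ℝ) * ((φ j k - φ k k) - (φ j j - φ k j)) else 0)
      = ∑ j, ∑ k, (if Adj j k ∧ j < k then f j k + f k j else 0) := by
        refine sum_congr rfl fun j _ => sum_congr rfl fun k _ => if_congr Iff.rfl ?_ rfl
        ring
    _ = ∑ j, ∑ k, (if Adj j k then f j k else 0) := sum_adj_lt_add_swap hsymm f (by simp [hf])
    _ = ∑ j, (mult j : ℝ) * ∑ k, (if Adj j k then (mult k : ℝ) * (φ j k - φ j j) else 0) := by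
        simp only [hf, mul_sum, mul_ite_zero]
    _ = 0 := sum_eq_zero fun j _ => by
        rw [IsLinearAt.sum_mul_sub_eq_zero (hlin j), mul_zero]

/-- `deg ∘ d⁰ = 0` on a finite connected graph. A collection of vertex-star
functions is encoded by `φ : V → V → ℝ`, where `φ i j` is the value of `φ_i`
at `j` (meaningful for `j = i` or `j` adjacent to `i`).  Linearity at `i` reads
`φ_i(i)·Σ_{j∼i} mult(j) = Σ_{j∼i} mult(j)·φ_i(j)`.  The edge cochain
`d⁰({φ_i})_{jk} = φ_j − φ_k` (for `j ≺ k`) has value `φ j k − φ k k` at `k`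
and `φ j j − φ k j` at `j`, and its degree vanishes. -/
theorem deg_comp_d0_eq_zero
    {V : Type} [Fintype V] [LinearOrder V]
    (Adj : V → V → Prop) [DecidableRel Adj]
    (hsymm : ∀ j k, Adj j k → Adj k j) (hirr : ∀ j, ¬ Adj j j)
    (hconn : ∀ u v : V, Relation.ReflTransGen Adj u v)
    (mult : V → ℤ) (hmult : ∀ i, 0 < mult i)
    (φ : V → V → ℝ)
    (hlin : ∀ i, φ i i * (∑ j, if Adj i j then (mult j : ℝ) else 0)
        = ∑ j, if Adj i j then (mult j : ℝ) * φ i j else 0) :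
    ∑ j, ∑ k, (if Adj j k ∧ j < k then
      (mult j : ℝ) * (mult k : ℝ) * ((φ j k - φ k k) - (φ j j - φ k j)) else 0) = 0 :=
  deg_comp_d0_eq_zero_general Adj hsymm mult φ hlin
end

section
/- Let G be a finite connected graph with n_E edges and positive integer vertex multiplicities. Consider the two-term complex 0 → C⁰ →^{d⁰} C¹ → 0 where C⁰ ≅ ℝ^{2n_E} is the space of collections of vertex-star functions linear at each vertex, C¹ ≅ ℝ^{2n_E} is the space of collections of affine functions on the open edges, and d⁰({φ_i})_{jk} = φ_j|_{e_{jk}} − φ_k|_{e_{jk}}. Then H¹ := C¹/im(d⁰) is one-dimensional over ℝ, and the map deg({ψ_{jk}}) = Σ_{j≺k} mult(j)·mult(k)·(ψ_{jk}(k) − ψ_{jk}(j)) descends to an isomorphism H¹ ≅ ℝ. -/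
open Finset

/-- Degree of an edge 1-cochain `η : V → V → ℝ`, where for adjacent `j < k`,
`η j k` is the value at `k` of the affine function on the edge `jk` and
`η k j` is its value at `j`. -/
def degC {V : Type} [Fintype V] [LinearOrder V] (Adj : V → V → Prop) [DecidableRel Adj]
    (mult : V → ℤ) (η : V → V → ℝ) : ℝ :=
  ∑ j, ∑ k, if Adj j k ∧ j < k then (mult j : ℝ) * (mult k : ℝ) * (η j k - η k j) else 0

/-- Linearity of a vertex-star function `φ i` at the vertex `i`. -/
def linAt {V : Type} [Fintype V] (Adj : V → V → Prop) [DecidableRel Adj]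
    (mult : V → ℤ) (φ : V → V → ℝ) (i : V) : Prop :=
  φ i i * (∑ j, if Adj i j then (mult j : ℝ) else 0)
    = ∑ j, if Adj i j then (mult j : ℝ) * φ i j else 0

/-!
Pairing the two orientations of each edge, the degree of any cochain `η` with
`η j k - η k j = g j k + g k j` on edges `j < k` is `∑ i, mult i * ∑_{j ~ i} mult j * g i j`.
For `η = d⁰ φ` take `g i j = φ i j - φ i i`: each inner sum vanishes by linearity of `φ i` at `i`.

Conversely, given `η` of degree `0`, look for a preimage `φ i j = c j + orient η i j`.
Linearity at every vertex becomes the equation `L c = B` for the Laplacian `L` with edge weights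
`mult i * mult j`, where `B i = mult i * ∑_{j ~ i} mult j * orient η i j` has total sum `deg η = 0`.
Since `L` is symmetric with `∑ i, c i * (L c) i = ½ ∑_{i ~ j} mult i * mult j * (c i - c j)²`,
on a connected graph its kernel is the constants, so by rank–nullity its range is the whole sum-zero hyperplane.
-/

lemma sum_sum_ite_lt_add_swap {V M : Type*} [Fintype V] [LinearOrder V] [AddCommMonoid M]
    (g : V → V → M) (hg : ∀ i, g i i = 0) :
    ∑ i, ∑ j, (if i < j then g i j + g j i else 0) = ∑ i, ∑ j, g i j := by
  have hsplit : ∀ i j, g i j = (if i < j then g i j else 0) + if j < i then g i j else 0 := by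
    intro i j
    rcases lt_trichotomy i j with h | rfl | h
    · simp [h, h.not_gt]
    · simp [hg]
    · simp [h, h.not_gt]
  have hswap : ∑ i, ∑ j, (if i < j then g j i else 0) = ∑ i, ∑ j, if j < i then g i j else 0 :=
    Finset.sum_comm
  simp_rw [ite_add_zero, Finset.sum_add_distrib, hswap, ← Finset.sum_add_distrib, ← hsplit]

section WeightedLaplacian

variable {V : Type*} [Fintype V] (w : V → V → ℝ)

def weightedLaplacian : (V → ℝ) →ₗ[ℝ] V → ℝ :=
  LinearMap.pi fun i =>
    ∑ j, w i j • (LinearMap.proj (R := ℝ) (φ := fun _ : V => ℝ) i - LinearMap.proj j)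

lemma weightedLaplacian_apply (c : V → ℝ) (i : V) :
    weightedLaplacian w c i = ∑ j, w i j * (c i - c j) := by
  simp [weightedLaplacian]

variable {w}

lemma two_mul_sum_mul_weightedLaplacian (hw : ∀ i j, w i j = w j i) (c d : V → ℝ) :
    2 * ∑ i, d i * weightedLaplacian w c i
      = ∑ i, ∑ j, w i j * ((d i - d j) * (c i - c j)) := by
  have hswap :
      ∑ i, ∑ j, w i j * (d i * (c i - c j)) = ∑ i, ∑ j, w i j * (d j * (c j - c i)) := by
    rw [Finset.sum_comm]
    simp_rw [hw]
  calc 2 * ∑ i, d i * weightedLaplacian w c i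
      = ∑ i, ∑ j, w i j * (d i * (c i - c j)) + ∑ i, ∑ j, w i j * (d j * (c j - c i)) := by
        rw [← hswap, ← two_mul]
        refine congrArg _ (sum_congr rfl fun i _ => ?_)
        rw [weightedLaplacian_apply, Finset.mul_sum]
        exact sum_congr rfl fun j _ => by ring
    _ = ∑ i, ∑ j, w i j * ((d i - d j) * (c i - c j)) := by
        simp_rw [← Finset.sum_add_distrib]
        exact sum_congr rfl fun i _ => sum_congr rfl fun j _ => by ring

lemma sum_weightedLaplacian (hw : ∀ i j, w i j = w j i) (c : V → ℝ) :
    ∑ i, weightedLaplacian w c i = 0 := by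
  simpa using two_mul_sum_mul_weightedLaplacian hw c 1

lemma eq_of_weightedLaplacian_eq_zero (hw : ∀ i j, w i j = w j i) (hnn : ∀ i j, 0 ≤ w i j)
    {c : V → ℝ} (hc : weightedLaplacian w c = 0) {i j : V} (hij : 0 < w i j) : c i = c j := by
  have hterm : ∀ i j, 0 ≤ w i j * ((c i - c j) * (c i - c j)) :=
    fun i j => mul_nonneg (hnn i j) (mul_self_nonneg _)
  have hsum : ∑ i, ∑ j, w i j * ((c i - c j) * (c i - c j)) = 0 := by
    simp [← two_mul_sum_mul_weightedLaplacian hw, hc]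
  have hzero := (Finset.sum_eq_zero_iff_of_nonneg fun j _ => hterm i j).mp
    ((Finset.sum_eq_zero_iff_of_nonneg fun i _ => Finset.sum_nonneg fun j _ => hterm i j).mp
      hsum i (mem_univ i)) j (mem_univ j)
  rw [mul_eq_zero, mul_self_eq_zero, sub_eq_zero] at hzero
  exact hzero.resolve_left hij.ne'

variable (hw : ∀ i j, w i j = w j i) (hnn : ∀ i j, 0 ≤ w i j)
  (hconn : ∀ u v, Relation.ReflTransGen (fun i j => 0 < w i j) u v)
include hw hnn hconn

lemma ker_weightedLaplacian_le_span_one [Nonempty V] :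
    LinearMap.ker (weightedLaplacian w) ≤ Submodule.span ℝ {fun _ => 1} := by
  intro c hc
  have hconst : ∀ u v, c u = c v := fun u v => by
    induction hconn u v with
    | refl => rfl
    | tail _ huv ih => exact ih.trans (eq_of_weightedLaplacian_eq_zero hw hnn hc huv)
  refine Submodule.mem_span_singleton.mpr ⟨c (Classical.arbitrary V), funext fun v => ?_⟩
  simpa using hconst _ v

lemma exists_weightedLaplacian_eq [Nonempty V] {B : V → ℝ} (hB : ∑ i, B i = 0) :
    ∃ c, weightedLaplacian w c = B := by
  classical
  let σ : (V → ℝ) →ₗ[ℝ] ℝ := ∑ i, LinearMap.proj i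
  have hσ : ∀ x, σ x = ∑ i, x i := fun x => by simp [σ]
  have hle : LinearMap.range (weightedLaplacian w) ≤ LinearMap.ker σ := by
    rintro _ ⟨c, rfl⟩
    simp [hσ, sum_weightedLaplacian hw]
  have hσ0 : σ ≠ 0 := fun h => by
    simpa [hσ] using LinearMap.congr_fun h (Pi.single (Classical.arbitrary V) 1)
  have hkerσ := Module.Dual.finrank_ker_add_one_of_ne_zero hσ0
  have hkerL : Module.finrank ℝ (LinearMap.ker (weightedLaplacian w)) ≤ 1 :=
    (Submodule.finrank_mono (ker_weightedLaplacian_le_span_one hw hnn hconn)).trans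
      ((finrank_span_le_card _).trans (by simp))
  have hrank := (weightedLaplacian w).finrank_range_add_finrank_ker
  have hrange : LinearMap.range (weightedLaplacian w) = LinearMap.ker σ :=
    Submodule.eq_of_le_of_finrank_le hle (by omega)
  exact hrange.ge ((hσ B).trans hB)

end WeightedLaplacian

section Graph

variable {V : Type} {Adj : V → V → Prop} [DecidableRel Adj] {mult : V → ℤ}

variable (Adj mult) in
def edgeWeight (i j : V) : ℝ := if Adj i j then (mult i : ℝ) * mult j else 0

lemma edgeWeight_comm (hsymm : ∀ j k, Adj j k → Adj k j) (i j : V) :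
    edgeWeight Adj mult i j = edgeWeight Adj mult j i := by
  by_cases h : Adj i j
  · simp [edgeWeight, h, hsymm _ _ h, mul_comm]
  · simp [edgeWeight, h, mt (hsymm j i) h]

lemma edgeWeight_nonneg (hmult : ∀ i, 0 < mult i) (i j : V) : 0 ≤ edgeWeight Adj mult i j := by
  unfold edgeWeight
  split_ifs
  exacts [mul_nonneg (Int.cast_pos.mpr (hmult i)).le (Int.cast_pos.mpr (hmult j)).le, le_rfl]

lemma edgeWeight_pos (hmult : ∀ i, 0 < mult i) {i j : V} (h : Adj i j) :
    0 < edgeWeight Adj mult i j := by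
  simpa [edgeWeight, h] using mul_pos (Int.cast_pos.mpr (hmult i)) (Int.cast_pos.mpr (hmult j))

variable [Fintype V]

lemma linAt_iff {φ : V → V → ℝ} {i : V} :
    linAt Adj mult φ i ↔ ∑ j, (if Adj i j then (mult j : ℝ) * (φ i j - φ i i) else 0) = 0 := by
  have h : ∀ j, (if Adj i j then (mult j : ℝ) * (φ i j - φ i i) else 0)
      = (if Adj i j then (mult j : ℝ) * φ i j else 0)
        - φ i i * if Adj i j then (mult j : ℝ) else 0 :=
    fun j => by split_ifs <;> ring
  rw [linAt, Finset.sum_congr rfl fun j _ => h j, Finset.sum_sub_distrib, ← Finset.mul_sum,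
    sub_eq_zero, eq_comm]

lemma weightedLaplacian_edgeWeight_apply (c : V → ℝ) (i : V) :
    weightedLaplacian (edgeWeight Adj mult) c i
      = mult i * ∑ j, if Adj i j then (mult j : ℝ) * (c i - c j) else 0 := by
  rw [weightedLaplacian_apply, Finset.mul_sum]
  refine sum_congr rfl fun j _ => ?_
  split_ifs with h
  · rw [edgeWeight, if_pos h]
    ring
  · simp [edgeWeight, h]

variable [LinearOrder V]

variable (Adj) in
def coboundary (φ : V → V → ℝ) : V → V → ℝ :=
  fun a b => if Adj a b ∧ a < b then φ a b - φ b b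
    else if Adj a b ∧ b < a then φ b b - φ a b else 0

def orient (η : V → V → ℝ) : V → V → ℝ :=
  fun a b => if a < b then η a b else if b < a then -η a b else 0

lemma degC_smul (r : ℝ) (η : V → V → ℝ) : degC Adj mult (r • η) = r * degC Adj mult η := by
  simp_rw [degC, Finset.mul_sum, mul_ite, mul_zero, Pi.smul_apply, smul_eq_mul]
  exact sum_congr rfl fun j _ => sum_congr rfl fun k _ => by split_ifs <;> ring

variable (hsymm : ∀ j k, Adj j k → Adj k j) (hirr : ∀ j, ¬ Adj j j)
include hsymm hirr

lemma degC_eq_sum_mul_sum {η g : V → V → ℝ}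
    (hg : ∀ j k, Adj j k → j < k → η j k - η k j = g j k + g k j) :
    degC Adj mult η = ∑ i, (mult i : ℝ) * ∑ j, if Adj i j then (mult j : ℝ) * g i j else 0 := by
  simp_rw [Finset.mul_sum, mul_ite, mul_zero, ← mul_assoc]
  rw [← sum_sum_ite_lt_add_swap _ fun i => by simp [hirr i], degC]
  refine sum_congr rfl fun j _ => sum_congr rfl fun k _ => ?_
  by_cases hjk : Adj j k ∧ j < k
  · simp only [hjk, hsymm _ _ hjk.1, and_self, if_true, hg _ _ hjk.1 hjk.2]
    ring
  · have hnadj : j < k → ¬ Adj j k ∧ ¬ Adj k j :=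
      fun hlt => ⟨fun h => hjk ⟨h, hlt⟩, fun h => hjk ⟨hsymm _ _ h, hlt⟩⟩
    by_cases hlt : j < k
    · simp [hnadj hlt]
    · simp [hlt]

lemma degC_coboundary_eq_zero {φ : V → V → ℝ} (hφ : ∀ i, linAt Adj mult φ i) :
    degC Adj mult (coboundary Adj φ) = 0 := by
  rw [degC_eq_sum_mul_sum hsymm hirr (g := fun i j => φ i j - φ i i)]
  · simp [linAt_iff.mp (hφ _)]
  · intro j k hjk hlt
    simp only [coboundary, hjk, hsymm _ _ hjk, hlt, hlt.not_gt, and_self, and_false, if_true,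
      if_false]
    ring

lemma degC_surjective (hmult : ∀ i, 0 < mult i) (hE : ∃ j k, Adj j k) :
    Function.Surjective (degC Adj mult) := by
  obtain ⟨j, k, hjk, hlt⟩ : ∃ j k, Adj j k ∧ j < k := by
    obtain ⟨a, b, hab⟩ := hE
    have hne : a ≠ b := by
      rintro rfl
      exact hirr a hab
    rcases hne.lt_or_gt with h | h
    exacts [⟨a, b, hab, h⟩, ⟨b, a, hsymm _ _ hab, h⟩]
  set η₀ : V → V → ℝ := fun a b => if a < b then 1 else 0
  have hterm : ∀ a b, (if Adj a b ∧ a < b then (mult a : ℝ) * mult b * (η₀ a b - η₀ b a) else 0)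
      = if a < b then edgeWeight Adj mult a b else 0 := fun a b => by
    by_cases hab : a < b
    · by_cases h : Adj a b <;> simp [η₀, edgeWeight, h, hab, hab.not_gt]
    · simp [hab]
  have hnn : ∀ a b, 0 ≤ if a < b then edgeWeight Adj mult a b else 0 := fun a b => by
    split_ifs
    exacts [edgeWeight_nonneg hmult a b, le_rfl]
  have hpos : 0 < degC Adj mult η₀ := by
    simp_rw [degC, hterm]
    refine sum_pos' (fun a _ => sum_nonneg fun b _ => hnn a b) ⟨j, mem_univ j, ?_⟩
    refine sum_pos' (fun b _ => hnn j b) ⟨k, mem_univ k, ?_⟩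
    simpa [hlt] using edgeWeight_pos hmult hjk
  intro r
  exact ⟨(r / degC Adj mult η₀) • η₀, by rw [degC_smul, div_mul_cancel₀ _ hpos.ne']⟩

lemma exists_linAt_coboundary_eq [Nonempty V] (hconn : ∀ u v, Relation.ReflTransGen Adj u v)
    (hmult : ∀ i, 0 < mult i) {η : V → V → ℝ} (hη : degC Adj mult η = 0) :
    ∃ φ : V → V → ℝ, (∀ i, linAt Adj mult φ i) ∧
      ∀ j k, Adj j k → j < k → η j k = φ j k - φ k k ∧ η k j = φ j j - φ k j := by
  set B : V → ℝ := fun i => mult i * ∑ j, if Adj i j then (mult j : ℝ) * orient η i j else 0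
  have hB : ∑ i, B i = 0 := by
    rw [← hη, degC_eq_sum_mul_sum hsymm hirr (g := orient η)]
    intro j k _ hlt
    simp only [orient, hlt, hlt.not_gt, if_true, if_false]
    ring
  obtain ⟨c, hc⟩ := exists_weightedLaplacian_eq (edgeWeight_comm hsymm) (edgeWeight_nonneg hmult)
    (fun u v => Relation.ReflTransGen.mono (fun _ _ => edgeWeight_pos hmult) _ _ (hconn u v)) hB
  refine ⟨fun i j => c j + orient η i j, fun i => linAt_iff.mpr ?_, fun j k _ hlt => ?_⟩
  · have hbalance := mul_left_cancel₀ (Int.cast_pos.mpr (hmult i)).ne'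
      ((weightedLaplacian_edgeWeight_apply c i).symm.trans (congrFun hc i))
    rw [eq_comm, ← sub_eq_zero, ← Finset.sum_sub_distrib] at hbalance
    refine Eq.trans (sum_congr rfl fun j _ => ?_) hbalance
    have hdiag : orient η i i = 0 := by simp [orient]
    split_ifs
    · rw [hdiag]
      ring
    · rw [sub_zero]
  · simp [orient, hlt, hlt.not_gt]

end Graph

/-- `H¹ = C¹/im d⁰` of the two-term complex is one-dimensional, and `deg`
descends to an isomorphism `H¹ ≅ ℝ`: namely (i) `deg ∘ d⁰ = 0`,
(ii) `deg` is surjective, and (iii) every 1-cochain of degree `0`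
is a coboundary of a collection of vertex-star functions linear at each vertex. -/
theorem h1_one_dimensional_deg_iso
    {V : Type} [Fintype V] [LinearOrder V]
    (Adj : V → V → Prop) [DecidableRel Adj]
    (hsymm : ∀ j k, Adj j k → Adj k j) (hirr : ∀ j, ¬ Adj j j)
    (hconn : ∀ u v : V, Relation.ReflTransGen Adj u v)
    (mult : V → ℤ) (hmult : ∀ i, 0 < mult i)
    (hE : ∃ j k, Adj j k) :
    (∀ φ : V → V → ℝ, (∀ i, linAt Adj mult φ i) →
      degC Adj mult (fun a b => if Adj a b ∧ a < b then φ a b - φ b b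
        else if Adj a b ∧ b < a then φ b b - φ a b else 0) = 0) ∧
    Function.Surjective (degC Adj mult) ∧
    (∀ η : V → V → ℝ, degC Adj mult η = 0 →
      ∃ φ : V → V → ℝ, (∀ i, linAt Adj mult φ i) ∧
        ∀ j k, Adj j k → j < k → η j k = φ j k - φ k k ∧ η k j = φ j j - φ k j) := by
  have : Nonempty V := hE.nonempty
  exact ⟨fun φ hφ => degC_coboundary_eq_zero hsymm hirr hφ,
    degC_surjective hsymm hirr hmult hE,
    fun η hη => exists_linAt_coboundary_eq hsymm hirr hconn hmult hη⟩
end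

section
/- Let G be a finite connected graph with positive integer vertex multiplicities. Suppose a 1-cochain is given by transition data {φ_{jk}}_{j≺k} (affine functions on edges) and a 0-cochain {φ_i} of simple functions (not necessarily linear at the vertices) satisfies φ_j − φ_k = φ_{jk} on each edge jk. Define the degree of the curvature as deg_c := Σ_i mult(i)·( −φ_i(i)·Σ_{j∼i} mult(j) + Σ_{j∼i} mult(j)·φ_i(j) ). Then deg_c = Σ_{j≺k} mult(j)·mult(k)·(φ_{jk}(k) − φ_{jk}(j)). -/
open Finset

/-!
Expanding the curvature at `i` gives `Σ_{j∼i} mult(i)·mult(j)·(φ_i(j) − φ_i(i))`, a sum over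
oriented edges. Grouping the two orientations of each edge `j ≺ k` and using
`φ_j − φ_k = φ_{jk}` at both endpoints turns the pair of terms into
`mult(j)·mult(k)·(φ_{jk}(k) − φ_{jk}(j))`.
-/

theorem sum_ite_mul_sub {ι R : Type*} [Fintype ι] [CommRing R] (p : ι → Prop) [DecidablePred p]
    (m ψ : ι → R) (c : R) :
    ∑ j, (if p j then m j * (ψ j - c) else 0)
      = -c * (∑ j, if p j then m j else 0) + ∑ j, if p j then m j * ψ j else 0 := by
  rw [Finset.mul_sum, ← sum_add_distrib]
  refine sum_congr rfl fun j _ => ?_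
  split_ifs <;> ring

theorem sum_sum_eq_sum_sum_lt_add_swap {V R : Type*} [Fintype V] [LinearOrder V]
    [AddCommMonoid R] (g : V → V → R) (hg : ∀ i, g i i = 0) :
    ∑ i, ∑ j, g i j = ∑ j, ∑ k, if j < k then g j k + g k j else 0 := by
  have hsplit (i j : V) : g i j = (if i < j then g i j else 0) + (if j < i then g i j else 0) := by
    rcases lt_trichotomy i j with h | rfl | h
    · simp [h, h.not_gt]
    · simp [hg]
    · simp [h, h.not_gt]
  rw [sum_congr rfl fun i _ => sum_congr rfl fun j _ => hsplit i j]
  simp only [sum_add_distrib]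
  rw [sum_comm (f := fun i j => if j < i then g i j else 0), ← sum_add_distrib]
  refine sum_congr rfl fun j _ => ?_
  rw [← sum_add_distrib]
  exact sum_congr rfl fun k _ => by rw [ite_add_ite, add_zero]

/-- `φ i j` is the value at `j` of `φ_i`; for adjacent `j < k`, `t j k` and `t k j` are the values
of `φ_{jk}` at `k` and at `j`. -/
theorem deg_curvature_eq_deg_transition_general
    {V : Type} [Fintype V] [LinearOrder V]
    (Adj : V → V → Prop) [DecidableRel Adj]
    (hsymm : ∀ j k, Adj j k → Adj k j)
    (mult : V → ℤ)
    (φ t : V → V → ℝ)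
    (htrans : ∀ j k, Adj j k → j < k →
      φ j k - φ k k = t j k ∧ φ j j - φ k j = t k j) :
    ∑ i, (mult i : ℝ) *
        (-(φ i i) * (∑ j, if Adj i j then (mult j : ℝ) else 0)
          + ∑ j, if Adj i j then (mult j : ℝ) * φ i j else 0)
      = ∑ j, ∑ k, if Adj j k ∧ j < k then
          (mult j : ℝ) * (mult k : ℝ) * (t j k - t k j) else 0 := by
  set g : V → V → ℝ := fun i j =>
    if Adj i j then (mult i : ℝ) * (mult j : ℝ) * (φ i j - φ i i) else 0 with hg
  have curvature (i : V) :
      (mult i : ℝ) * (-(φ i i) * (∑ j, if Adj i j then (mult j : ℝ) else 0)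
          + ∑ j, if Adj i j then (mult j : ℝ) * φ i j else 0) = ∑ j, g i j := by
    rw [← sum_ite_mul_sub, Finset.mul_sum]
    refine sum_congr rfl fun j _ => ?_
    simp only [hg, mul_ite, mul_zero, mul_assoc]
  simp only [curvature]
  rw [sum_sum_eq_sum_sum_lt_add_swap g fun i => by simp [hg]]
  refine sum_congr rfl fun j _ => sum_congr rfl fun k _ => ?_
  by_cases hjk : j < k
  · by_cases hadj : Adj j k
    · obtain ⟨hk, hj⟩ := htrans j k hadj hjk
      simp only [hg, if_pos hadj, if_pos (hsymm j k hadj), if_pos (And.intro hadj hjk), if_pos hjk,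
        ← hk, ← hj]
      ring
    · have hadj' : ¬ Adj k j := fun h => hadj (hsymm k j h)
      simp [hg, hadj, hadj']
  · simp [hjk]

/-- Degree of the curvature equals the degree of the transition data
(Yu, Proposition 5.7).  `φ i j` is the value at `j` of the simple function
`φ_i` on the star of `i`; `t j k` (for adjacent `j < k`) is the value at `k`
of the transition function `φ_{jk}` and `t k j` its value at `j`.
If `φ_j − φ_k = φ_{jk}` on each edge, then
`Σ_i mult(i)·(−φ_i(i)·Σ_{j∼i} mult(j) + Σ_{j∼i} mult(j)·φ_i(j))
  = Σ_{j≺k} mult(j)·mult(k)·(φ_{jk}(k) − φ_{jk}(j))`. -/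
theorem deg_curvature_eq_deg_transition
    {V : Type} [Fintype V] [LinearOrder V]
    (Adj : V → V → Prop) [DecidableRel Adj]
    (hsymm : ∀ j k, Adj j k → Adj k j) (hirr : ∀ j, ¬ Adj j j)
    (hconn : ∀ u v : V, Relation.ReflTransGen Adj u v)
    (mult : V → ℤ) (hmult : ∀ i, 0 < mult i)
    (φ t : V → V → ℝ)
    (htrans : ∀ j k, Adj j k → j < k →
      φ j k - φ k k = t j k ∧ φ j j - φ k j = t k j) :
    ∑ i, (mult i : ℝ) *
        (-(φ i i) * (∑ j, if Adj i j then (mult j : ℝ) else 0)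
          + ∑ j, if Adj i j then (mult j : ℝ) * φ i j else 0)
      = ∑ j, ∑ k, if Adj j k ∧ j < k then
          (mult j : ℝ) * (mult k : ℝ) * (t j k - t k j) else 0 :=
  deg_curvature_eq_deg_transition_general Adj hsymm mult φ t htrans
end

section
/- Let G be a path graph with vertices 0, 1, …, m (in order) and multiplicities mult(i) ∈ ℤ_{>0}, and let transition data on the edge between i and i+1 be the affine function with values φ_{i,i+1}(i) = a_i and φ_{i,i+1}(i+1) = b_i. Then the degree deg = Σ_{i=0}^{m−1} mult(i)·mult(i+1)·(b_i − a_i), and this 1-cochain is a coboundary (i.e., lies in the image of d⁰ from vertex-star functions linear at each interior vertex) if and only if deg = 0 — where linearity at the interior vertex i (0 < i < m) means mult(i−1)·(φ_i(i−1) − φ_i(i)) + mult(i+1)·(φ_i(i+1) − φ_i(i)) = 0, and at the endpoints 0 and m the linearity condition reads mult(1)·(φ_0(1) − φ_0(0)) = 0 and mult(m−1)·(φ_m(m−1) − φ_m(m)) = 0. -/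
/-!
Let `x i` and `y i` be the slopes of `φ i` and `φ (i + 1)` along the edge `{i, i + 1}`, read
outward from its two ends. The values `φ i i` can always be integrated back from the slopes, so a
primitive exists iff there are slopes with `x i + y i = b i - a i` satisfying the linearity
conditions. Weighted by `mult i * mult (i + 1)`, linearity at an interior vertex says that the
weighted slopes on its two edges cancel, and at the ends that the outermost weighted slopes vanish;
hence the degree, which is the sum of all weighted slopes, vanishes. Conversely, the weighted
slopes are then forced to be partial sums of the degree, and the last linearity condition is
exactly `deg = 0`.
-/

open Finset

theorem Finset.sum_range_succ_add_regroup {M : Type*} [AddCommMonoid M] (x y : ℕ → M) (n : ℕ) :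
    ∑ i ∈ range (n + 1), (x i + y i) = x 0 + ∑ i ∈ range n, (y i + x (i + 1)) + y n := by
  rw [sum_add_distrib, sum_range_succ' x, sum_range_succ y, sum_add_distrib]
  abel

namespace PathGraph

variable {K : Type*}

section CommRing

variable [CommRing K]

/-- `φ i` is the vertex-star function at vertex `i` of the path `0, 1, …, m` with multiplicities
`μ`: it is linear at `i`, and `d⁰ φ` takes the values `a i` at `i` and `b i` at `i + 1` on the
edge `{i, i + 1}`. -/
def IsLinearPrimitive (μ : ℕ → K) (m : ℕ) (a b : ℕ → K) (φ : ℕ → ℕ → K) : Prop :=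
  μ 1 * (φ 0 1 - φ 0 0) = 0 ∧
  μ (m - 1) * (φ m (m - 1) - φ m m) = 0 ∧
  (∀ i, 0 < i → i < m →
    μ (i - 1) * (φ i (i - 1) - φ i i) + μ (i + 1) * (φ i (i + 1) - φ i i) = 0) ∧
  ∀ i < m, φ i (i + 1) - φ (i + 1) (i + 1) = b i ∧ φ i i - φ (i + 1) i = a i

/-- Linearity of the star functions on the path `0, 1, …, n + 1`, in terms of the slopes
`x i = φ i (i + 1) - φ i i` and `y i = φ (i + 1) i - φ (i + 1) (i + 1)`. -/
structure IsBalancedSlopes (μ : ℕ → K) (n : ℕ) (x y : ℕ → K) : Prop where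
  left : μ 1 * x 0 = 0
  right : μ n * y n = 0
  interior : ∀ j < n, μ j * y j + μ (j + 2) * x (j + 1) = 0

theorem exists_isLinearPrimitive_zero (μ : ℕ → K) (a b : ℕ → K) :
    ∃ φ, IsLinearPrimitive μ 0 a b φ :=
  ⟨0, by simp [IsLinearPrimitive]⟩

theorem exists_isLinearPrimitive_iff (μ : ℕ → K) (n : ℕ) (a b : ℕ → K) :
    (∃ φ, IsLinearPrimitive μ (n + 1) a b φ) ↔
      ∃ x y, IsBalancedSlopes μ n x y ∧ ∀ i ≤ n, x i + y i = b i - a i := by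
  constructor
  · rintro ⟨φ, hleft, hright, hinterior, hd⟩
    refine ⟨fun i => φ i (i + 1) - φ i i, fun i => φ (i + 1) i - φ (i + 1) (i + 1),
      ⟨hleft, by simpa using hright, fun j hj => ?_⟩, fun i hi => ?_⟩
    · simpa using hinterior (j + 1) j.succ_pos (by omega)
    · obtain ⟨hb, ha⟩ := hd i (by omega)
      linear_combination hb - ha
  · rintro ⟨x, y, hxy, hδ⟩
    let c : ℕ → K := fun i => -∑ k ∈ range i, (a k + y k)
    have hc : ∀ i, c (i + 1) = c i - a i - y i := fun i => by
      simp only [c, sum_range_succ]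
      ring
    refine ⟨fun i j => if i < j then c i + x i else if j < i then c i + y (i - 1) else c i,
      ?_, ?_, ?_, fun i hi => ?_⟩
    · simpa using hxy.left
    · simpa using hxy.right
    · rintro (_ | j) hpos hj
      · exact absurd hpos (lt_irrefl 0)
      · simpa using hxy.interior j (by omega)
    · simp only [lt_add_iff_pos_right, zero_lt_one, if_true, lt_irrefl, if_false,
        Nat.not_lt.2 (Nat.le_succ i), Nat.add_sub_cancel, hc]
      exact ⟨by linear_combination hδ i (by omega), by ring⟩

theorem IsBalancedSlopes.sum_mul_mul_add_eq_zero {μ : ℕ → K} {n : ℕ} {x y : ℕ → K}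
    (h : IsBalancedSlopes μ n x y) :
    ∑ i ∈ range (n + 1), μ i * μ (i + 1) * (x i + y i) = 0 := by
  have hleft : μ 0 * μ 1 * x 0 = 0 := by linear_combination μ 0 * h.left
  have hright : μ n * μ (n + 1) * y n = 0 := by linear_combination μ (n + 1) * h.right
  have hinterior : ∀ j ∈ range n,
      μ j * μ (j + 1) * y j + μ (j + 1) * μ (j + 1 + 1) * x (j + 1) = 0 := fun j hj => by
    linear_combination μ (j + 1) * h.interior j (mem_range.1 hj)
  simp_rw [mul_add]
  rw [sum_range_succ_add_regroup (fun i => μ i * μ (i + 1) * x i)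
    (fun i => μ i * μ (i + 1) * y i), hleft, hright, sum_eq_zero hinterior]
  simp

end CommRing

theorem exists_isBalancedSlopes_iff [Field K] {μ : ℕ → K} {n : ℕ} (hμ : ∀ i ≤ n + 1, μ i ≠ 0)
    (δ : ℕ → K) :
    (∃ x y, IsBalancedSlopes μ n x y ∧ ∀ i ≤ n, x i + y i = δ i) ↔
      ∑ i ∈ range (n + 1), μ i * μ (i + 1) * δ i = 0 := by
  constructor
  · rintro ⟨x, y, hxy, hδ⟩
    rw [← hxy.sum_mul_mul_add_eq_zero]
    exact sum_congr rfl fun i hi => by rw [hδ i (Nat.lt_succ_iff.1 (mem_range.1 hi))]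
  · intro hdeg
    -- Balancing forces the weighted slopes `μ i * μ (i + 1) * x i` to be the partial sums `-P i`.
    let P : ℕ → K := fun i => ∑ k ∈ range i, μ k * μ (k + 1) * δ k
    refine ⟨fun i => -P i / (μ i * μ (i + 1)), fun i => P (i + 1) / (μ i * μ (i + 1)),
      ⟨by simp [P], by simp [P, hdeg], fun j hj => ?_⟩, fun i hi => ?_⟩
    · have := hμ j (by omega)
      have := hμ (j + 1) (by omega)
      have := hμ (j + 2) (by omega)
      field_simp
      ring
    · have := hμ i (by omega)
      have := hμ (i + 1) (by omega)
      field_simp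
      simp only [P, sum_range_succ]
      ring

end PathGraph

theorem path_coboundary_iff_deg_zero_general
    (m : ℕ)
    (mult : ℕ → ℤ) (hmult : ∀ i ≤ m, 0 < mult i)
    (a b : ℕ → ℝ) :
    (∃ φ : ℕ → ℕ → ℝ,
      ((mult 1 : ℝ) * (φ 0 1 - φ 0 0) = 0) ∧
      ((mult (m - 1) : ℝ) * (φ m (m - 1) - φ m m) = 0) ∧
      (∀ i, 0 < i → i < m →
        (mult (i - 1) : ℝ) * (φ i (i - 1) - φ i i)
          + (mult (i + 1) : ℝ) * (φ i (i + 1) - φ i i) = 0) ∧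
      (∀ i < m, φ i (i + 1) - φ (i + 1) (i + 1) = b i ∧
        φ i i - φ (i + 1) i = a i))
    ↔ ∑ i ∈ Finset.range m, (mult i : ℝ) * (mult (i + 1) : ℝ) * (b i - a i) = 0 := by
  change (∃ φ, PathGraph.IsLinearPrimitive (fun i => (mult i : ℝ)) m a b φ) ↔ _
  cases m with
  | zero => exact iff_of_true (PathGraph.exists_isLinearPrimitive_zero _ a b) (sum_range_zero _)
  | succ n =>
    have hμ : ∀ i ≤ n + 1, (mult i : ℝ) ≠ 0 := fun i hi => by exact_mod_cast (hmult i hi).ne'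
    exact (PathGraph.exists_isLinearPrimitive_iff _ n a b).trans
      (PathGraph.exists_isBalancedSlopes_iff hμ _)

/-- Path graph case of Yu, Proposition 5.2: on the path with vertices
`0, 1, …, m`, the 1-cochain with values `a i` (at `i`) and `b i` (at `i+1`)
on the edge `{i, i+1}` is a coboundary of a collection of vertex-star
functions linear at each vertex if and only if its degree
`Σ_i mult(i)·mult(i+1)·(b i − a i)` vanishes. -/
theorem path_coboundary_iff_deg_zero
    (m : ℕ) (hm : 1 ≤ m)
    (mult : ℕ → ℤ) (hmult : ∀ i ≤ m, 0 < mult i)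
    (a b : ℕ → ℝ) :
    (∃ φ : ℕ → ℕ → ℝ,
      ((mult 1 : ℝ) * (φ 0 1 - φ 0 0) = 0) ∧
      ((mult (m - 1) : ℝ) * (φ m (m - 1) - φ m m) = 0) ∧
      (∀ i, 0 < i → i < m →
        (mult (i - 1) : ℝ) * (φ i (i - 1) - φ i i)
          + (mult (i + 1) : ℝ) * (φ i (i + 1) - φ i i) = 0) ∧
      (∀ i < m, φ i (i + 1) - φ (i + 1) (i + 1) = b i ∧
        φ i i - φ (i + 1) i = a i))
    ↔ ∑ i ∈ Finset.range m, (mult i : ℝ) * (mult (i + 1) : ℝ) * (b i - a i) = 0 :=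
  path_coboundary_iff_deg_zero_general m mult hmult a b
end

section
/- Let G be a cycle graph with vertices 0, 1, …, m−1 (indices mod m, m ≥ 3) and multiplicities mult(i) ∈ ℤ_{>0}. With C⁰ the space of collections of vertex-star functions linear at each vertex (for a cycle, linearity at i reads mult(i−1)·(φ_i(i−1) − φ_i(i)) + mult(i+1)·(φ_i(i+1) − φ_i(i)) = 0, so C⁰ has dimension 2m), and C¹ ≅ ℝ^{2m} the edge cochains, the quotient C¹/im(d⁰) is one-dimensional, and the class of a cochain {φ_{i,i+1}} is determined by the number Σ_{i} mult(i)·mult(i+1)·(φ_{i,i+1}(i+1) − φ_{i,i+1}(i)). -/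
open Finset

/-- Degree of a 1-cochain on the cycle with `m + 3` vertices: on the edge
from `i` to `i+1` (cyclically), the affine function has value `a i` at `i`
and `b i` at `i+1`. -/
def cycleDeg (m : ℕ) (mult : Fin (m + 3) → ℤ) (a b : Fin (m + 3) → ℝ) : ℝ :=
  ∑ i : Fin (m + 3), (mult i : ℝ) * (mult (i + 1) : ℝ) * (b i - a i)

/-- Linearity at the vertex `i` of the cycle (neighbors `i − 1` and `i + 1`). -/
def cycleLinAt (m : ℕ) (mult : Fin (m + 3) → ℤ)
    (φ : Fin (m + 3) → Fin (m + 3) → ℝ) (i : Fin (m + 3)) : Prop :=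
  (mult (i - 1) : ℝ) * (φ i (i - 1) - φ i i)
    + (mult (i + 1) : ℝ) * (φ i (i + 1) - φ i i) = 0

/-!
Write `w i = mult i * mult (i + 1)` for the weight of the edge from `i` to `i + 1`. Summation by
parts turns the degree of a coboundary into `∑ i, mult i * (linearity defect of φ i at i)`, so it
vanishes. Conversely, a star function linear at `i` is determined by its value `c i` at `i` and a
"flux" `u i`: its slope towards a neighbour `j` is `± u i / (mult i * mult j)`. For such stars the
coboundary equations read `u i - u (i + 1) = w i * (b i - a i)` and
`c i - c (i + 1) = b i - u i / w i`. Around the cycle the first is solvable exactly when the degree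
vanishes, and then `u` is free up to an additive constant; since `∑ i, 1 / w i > 0` that constant
can be chosen so that the right-hand sides of the second equation sum to zero, which makes it
solvable as well.
-/

theorem Fin.exists_sub_add_one_eq_of_sum_eq_zero {M : Type*} [AddCommGroup M] {n : ℕ}
    (f : Fin (n + 1) → M) (hf : ∑ i, f i = 0) :
    ∃ P : Fin (n + 1) → M, ∀ i, P i - P (i + 1) = f i := by
  refine ⟨fun i => -Fin.partialSum (Fin.init f) i, fun i => ?_⟩
  induction i using Fin.lastCases with
  | last =>
    rw [Fin.sum_univ_castSucc, ← eq_neg_iff_add_eq_zero] at hf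
    simp [Fin.partialSum, List.take_of_length_le, List.sum_ofFn, Fin.init, hf]
  | cast j => simp [Fin.coeSucc_eq_succ, Fin.partialSum_succ, Fin.init]

section Cycle

variable {m : ℕ} {mult : Fin (m + 3) → ℤ}

theorem Fin.sub_one_ne_add_one (i : Fin (m + 3)) : i - 1 ≠ i + 1 := by
  rw [Ne, sub_eq_iff_eq_add, add_assoc, left_eq_add]
  simp [Fin.ext_iff, Fin.val_add, Nat.mod_eq_of_lt]

theorem cycleDeg_coboundary (φ : Fin (m + 3) → Fin (m + 3) → ℝ) :
    cycleDeg m mult (fun i => φ i i - φ (i + 1) i) (fun i => φ i (i + 1) - φ (i + 1) (i + 1)) =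
      ∑ i, (mult i : ℝ) * ((mult (i - 1) : ℝ) * (φ i (i - 1) - φ i i)
        + (mult (i + 1) : ℝ) * (φ i (i + 1) - φ i i)) := by
  have shift : ∑ i, (mult (i + 1) : ℝ) * mult i * (φ (i + 1) i - φ (i + 1) (i + 1)) =
      ∑ i, (mult i : ℝ) * mult (i - 1) * (φ i (i - 1) - φ i i) :=
    Fintype.sum_equiv (Equiv.addRight 1) _ _ fun i => by simp
  calc _ = ∑ i, (mult i : ℝ) * mult (i + 1) * (φ i (i + 1) - φ i i)
        + ∑ i, (mult (i + 1) : ℝ) * mult i * (φ (i + 1) i - φ (i + 1) (i + 1)) := by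
        rw [cycleDeg, ← sum_add_distrib]; congr! 1 with i; ring
    _ = _ := by rw [shift, ← sum_add_distrib]; congr! 1 with i; ring

theorem cycleDeg_coboundary_eq_zero {φ : Fin (m + 3) → Fin (m + 3) → ℝ}
    (hφ : ∀ i, cycleLinAt m mult φ i) :
    cycleDeg m mult (fun i => φ i i - φ (i + 1) i)
      (fun i => φ i (i + 1) - φ (i + 1) (i + 1)) = 0 := by
  rw [cycleDeg_coboundary]
  exact sum_eq_zero fun i _ => by rw [hφ i, mul_zero]

variable (mult) in
noncomputable def cycleStar (c u : Fin (m + 3) → ℝ) (i j : Fin (m + 3)) : ℝ :=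
  if j = i + 1 then c i + u i / (mult i * mult (i + 1))
  else if j = i - 1 then c i - u i / (mult (i - 1) * mult i)
  else c i

variable {c u : Fin (m + 3) → ℝ}

theorem cycleStar_self (i : Fin (m + 3)) : cycleStar mult c u i i = c i := by
  simp [cycleStar, eq_sub_iff_add_eq]

theorem cycleStar_add_one (i : Fin (m + 3)) :
    cycleStar mult c u i (i + 1) = c i + u i / (mult i * mult (i + 1)) := by
  simp [cycleStar]

theorem cycleStar_sub_one (i : Fin (m + 3)) :
    cycleStar mult c u i (i - 1) = c i - u i / (mult (i - 1) * mult i) := by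
  simp [cycleStar, Fin.sub_one_ne_add_one]

theorem cycleStar_add_one_self (i : Fin (m + 3)) :
    cycleStar mult c u (i + 1) i = c (i + 1) - u (i + 1) / (mult i * mult (i + 1)) := by
  simpa using cycleStar_sub_one (mult := mult) (c := c) (u := u) (i + 1)

theorem cycleLinAt_cycleStar (hmult : ∀ i, mult i ≠ 0) (i : Fin (m + 3)) :
    cycleLinAt m mult (cycleStar mult c u) i := by
  have hprev := hmult (i - 1); have hself := hmult i; have hnext := hmult (i + 1)
  rw [cycleLinAt, cycleStar_sub_one, cycleStar_add_one, cycleStar_self]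
  field_simp
  ring

theorem exists_cycleStar_of_cycleDeg_eq_zero (hmult : ∀ i, 0 < mult i) {a b : Fin (m + 3) → ℝ}
    (h : cycleDeg m mult a b = 0) :
    ∃ c u : Fin (m + 3) → ℝ, ∀ i,
      cycleStar mult c u i (i + 1) - cycleStar mult c u (i + 1) (i + 1) = b i ∧
        cycleStar mult c u i i - cycleStar mult c u (i + 1) i = a i := by
  set w : Fin (m + 3) → ℝ := fun i => mult i * mult (i + 1)
  have hw : ∀ i, 0 < w i := fun i => mul_pos (by exact_mod_cast hmult i) (by exact_mod_cast hmult _)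
  obtain ⟨P, hP⟩ := Fin.exists_sub_add_one_eq_of_sum_eq_zero (fun i => w i * (b i - a i)) h
  have hW : 0 < ∑ i, (w i)⁻¹ := sum_pos (fun i _ => inv_pos.2 (hw i)) univ_nonempty
  obtain ⟨t, ht⟩ : ∃ t, t * ∑ i, (w i)⁻¹ = ∑ i, b i - ∑ i, P i / w i :=
    ⟨_, div_mul_cancel₀ _ hW.ne'⟩
  have hbal : ∑ i, (b i - (P i + t) / w i) = 0 := by
    simp only [sum_sub_distrib, add_div, sum_add_distrib, div_eq_mul_inv t, ← mul_sum, ht]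
    ring
  obtain ⟨c, hc⟩ := Fin.exists_sub_add_one_eq_of_sum_eq_zero _ hbal
  refine ⟨c, fun i => P i + t, fun i => ⟨?_, ?_⟩⟩
  · rw [cycleStar_add_one, cycleStar_self]
    linear_combination hc i
  · have hPi : (P i - P (i + 1)) / w i = b i - a i := by
      rw [hP i, mul_div_cancel_left₀ _ (hw i).ne']
    rw [cycleStar_add_one_self, cycleStar_self]
    linear_combination hc i - hPi

theorem exists_cycleDeg_eq (h0 : mult 0 ≠ 0) (h1 : mult 1 ≠ 0) (t : ℝ) :
    ∃ a b, cycleDeg m mult a b = t :=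
  ⟨0, Pi.single 0 (t / (mult 0 * mult 1)), by
    simp [cycleDeg, Pi.single_apply]
    exact mul_div_cancel₀ _ (by exact_mod_cast mul_ne_zero h0 h1)⟩

end Cycle

/-- Cycle graph case of Yu, Proposition 5.2: for the cycle with `m + 3 ≥ 3`
vertices, `C¹/im(d⁰)` is one-dimensional and the class of a cochain is
determined by its degree: (i) every coboundary of a collection of vertex-star
functions linear at each vertex has degree `0`; (ii) every cochain of degree
`0` is such a coboundary; (iii) the degree map is surjective onto `ℝ`. -/
theorem cycle_h1_one_dimensional
    (m : ℕ) (mult : Fin (m + 3) → ℤ) (hmult : ∀ i, 0 < mult i) :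
    (∀ φ : Fin (m + 3) → Fin (m + 3) → ℝ, (∀ i, cycleLinAt m mult φ i) →
      cycleDeg m mult (fun i => φ i i - φ (i + 1) i)
        (fun i => φ i (i + 1) - φ (i + 1) (i + 1)) = 0) ∧
    (∀ a b : Fin (m + 3) → ℝ, cycleDeg m mult a b = 0 →
      ∃ φ : Fin (m + 3) → Fin (m + 3) → ℝ, (∀ i, cycleLinAt m mult φ i) ∧
        ∀ i, φ i (i + 1) - φ (i + 1) (i + 1) = b i ∧
          φ i i - φ (i + 1) i = a i) ∧
    (∀ t : ℝ, ∃ a b : Fin (m + 3) → ℝ, cycleDeg m mult a b = t) := by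
  have hmult_ne : ∀ i, mult i ≠ 0 := fun i => (hmult i).ne'
  refine ⟨fun φ hφ => cycleDeg_coboundary_eq_zero hφ, fun a b h => ?_,
    exists_cycleDeg_eq (hmult_ne 0) (hmult_ne 1)⟩
  obtain ⟨c, u, hcu⟩ := exists_cycleStar_of_cycleDeg_eq_zero hmult h
  exact ⟨cycleStar mult c u, cycleLinAt_cycleStar hmult_ne, hcu⟩
end
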